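/- For the Berwald–Moór metric of momenta one has ∑_r a_r^{ir} = n·a^i for every index i, and consequently the torsion covector vanishes: C^i := ∑_r C_r^{ir} = 0 for every i. -/

import Mathlib

open Finset

noncomputable section

/-- The Berwald–Moór coefficients: `a^{i₁…i_n} = 1/n!` if the indices are pairwise
distinct and `0` otherwise, with `n = N + 4`. -/
def BMc (N : ℕ) : (Fin (N + 4) → Fin (N + 4)) → ℝ :=
  fun ι => if Function.Injective ι then ((N + 4).factorial : ℝ)⁻¹ else 0

/-- `A(p) = ∑ a^{i₁…i_n} p_{i₁}⋯p_{i_n}`. -/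
def Afun (N : ℕ) (p : Fin (N + 4) → ℝ) : ℝ :=
  ∑ ι : Fin (N + 4) → Fin (N + 4), BMc N ι * ∏ t, p (ι t)

/-- `K(p) = A(p)^{1/n}`, the Berwald–Moór metric of momenta. -/
def Kfun (N : ℕ) (p : Fin (N + 4) → ℝ) : ℝ :=
  Afun N p ^ ((1 : ℝ) / (N + 4))

/-- `a^i = (∑ a^{i i₂…i_n} p_{i₂}⋯p_{i_n}) / K^{n-1}`. -/
def aU1 (N : ℕ) (i : Fin (N + 4)) (p : Fin (N + 4) → ℝ) : ℝ :=
  (∑ ι : Fin (N + 3) → Fin (N + 4), BMc N (Fin.cons i ι) * ∏ t, p (ι t)) / Kfun N p ^ (N + 3)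

/-- `a^{ij} = (∑ a^{i j i₃…i_n} p_{i₃}⋯p_{i_n}) / K^{n-2}`. -/
def aU2 (N : ℕ) (i j : Fin (N + 4)) (p : Fin (N + 4) → ℝ) : ℝ :=
  (∑ ι : Fin (N + 2) → Fin (N + 4), BMc N (Fin.cons i (Fin.cons j ι)) * ∏ t, p (ι t)) /
    Kfun N p ^ (N + 2)

/-- `a^{ijk} = (∑ a^{i j k i₄…i_n} p_{i₄}⋯p_{i_n}) / K^{n-3}`. -/
def aU3 (N : ℕ) (i j k : Fin (N + 4)) (p : Fin (N + 4) → ℝ) : ℝ :=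
  (∑ ι : Fin (N + 1) → Fin (N + 4), BMc N (Fin.cons i (Fin.cons j (Fin.cons k ι))) *
    ∏ t, p (ι t)) / Kfun N p ^ (N + 1)

/-- The matrix `a_{ij}`: `a_{ij} = n a_i a_j` for `i ≠ j` and `a_{ii} = -n(n-2) a_i²`,
where `a_i = p_i/K`. -/
def aLowBM (N : ℕ) (p : Fin (N + 4) → ℝ) (i j : Fin (N + 4)) : ℝ :=
  if i = j then -((N + 4 : ℝ) * (N + 2)) * (p i / Kfun N p) ^ 2
  else (N + 4 : ℝ) * (p i / Kfun N p) * (p j / Kfun N p)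

/-- `g_{ij} = (1/(n-1)) a_{ij} + ((n-2)/(n-1)) a_i a_j`. -/
def gLowBM (N : ℕ) (p : Fin (N + 4) → ℝ) (i j : Fin (N + 4)) : ℝ :=
  (1 / (N + 3 : ℝ)) * aLowBM N p i j +
    ((N + 2 : ℝ) / (N + 3)) * (p i / Kfun N p) * (p j / Kfun N p)

/-- Partial derivative `∂f/∂p_k` of a function of `p`. -/
def pd {n : ℕ} (f : (Fin n → ℝ) → ℝ) (k : Fin n) (p : Fin n → ℝ) : ℝ :=
  deriv (fun t => f (Function.update p k t)) (p k)

/-- Fundamental metrical d-tensor `g^{ij} = (1/2) ∂²(K²)/∂p_i∂p_j`. -/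
def gU (N : ℕ) (i j : Fin (N + 4)) (p : Fin (N + 4) → ℝ) : ℝ :=
  (1 / 2 : ℝ) * pd (fun q => pd (fun r => Kfun N r ^ 2) j q) i p

/-- Angular metrical d-tensor `h^{ij} = K ∂²K/∂p_i∂p_j`. -/
def hU (N : ℕ) (i j : Fin (N + 4)) (p : Fin (N + 4) → ℝ) : ℝ :=
  Kfun N p * pd (fun q => pd (Kfun N) j q) i p

/-- v-torsion d-tensor `C^{ijk} = -(1/2) ∂g^{ij}/∂p_k`. -/
def CU (N : ℕ) (i j k : Fin (N + 4)) (p : Fin (N + 4) → ℝ) : ℝ :=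
  -(1 / 2 : ℝ) * pd (gU N i j) k p

/-- v-derivation components `C_i^{jk} = ∑_s g_{is} C^{sjk}`. -/
def CL (N : ℕ) (p : Fin (N + 4) → ℝ) (i j k : Fin (N + 4)) : ℝ :=
  ∑ s, gLowBM N p i s * CU N s j k p

/-! On the positive orthant everything is explicit. Each product of distinct momenta occurs `n!`
times in `A`, so `A(p) = p₁⋯p_n`, `a^i = K/(n p_i)`, and `a^{ijk} = K³/(n(n-1)(n-2) p_i p_j p_k)`
for pairwise distinct indices (`0` otherwise); the first identity is then a count of index pairs.
`K² = ∏ p_l^{2/n}` is a monomial with real exponents, partial derivatives of such monomials are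
again monomials, so `g^{ij}` and `C^{ijk}` are explicit as well, and `C^i` becomes a sum of
Kronecker deltas that vanishes because `n · (2/n) = 2`. Behind this: `det g^{ij}` is constant and
`C^i = -½ ∂^i log det g^{ij}`. -/

theorem sum_ite_and_left {ι M : Type*} [Fintype ι] [AddCommMonoid M] (c : Prop) [Decidable c]
    (Q : ι → Prop) [DecidablePred Q] (f : ι → M) :
    (∑ x, if c ∧ Q x then f x else 0) = if c then ∑ x, if Q x then f x else 0 else 0 := by
  split_ifs with hc <;> simp [hc]

theorem injective_cons_and_notMem_iff {α : Type*} {m : ℕ} (x : α) (ι : Fin m → α)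
    (s : Finset α) [DecidableEq α] :
    (Function.Injective (Fin.cons x ι : Fin (m + 1) → α) ∧
        ∀ t, (Fin.cons x ι : Fin (m + 1) → α) t ∉ s) ↔
      x ∉ s ∧ Function.Injective ι ∧ ∀ t, ι t ∉ insert x s := by
  simp only [Fin.cons_injective_iff, Fin.forall_fin_succ, Fin.cons_zero, Fin.cons_succ,
    Set.mem_range, not_exists, Finset.mem_insert, not_or]
  constructor
  · rintro ⟨⟨hx, hι⟩, hxs, hs⟩
    exact ⟨hxs, hι, fun t => ⟨hx t, hs t⟩⟩
  · rintro ⟨hxs, hι, hs⟩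
    exact ⟨⟨fun t => (hs t).1, hι⟩, hxs, fun t => (hs t).2⟩

section FiniteSums

variable {α R : Type*} [Fintype α] [DecidableEq α] [CommSemiring R]

def sumInjectiveAvoiding (p : α → R) (s : Finset α) (m : ℕ) : R :=
  ∑ ι : Fin m → α, if Function.Injective ι ∧ ∀ t, ι t ∉ s then ∏ t, p (ι t) else 0

theorem sumInjectiveAvoiding_succ (p : α → R) (s : Finset α) (m : ℕ) :
    sumInjectiveAvoiding p s (m + 1) =
      ∑ x ∈ sᶜ, p x * sumInjectiveAvoiding p (insert x s) m := by
  have hcons : ∀ x (ι : Fin m → α),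
      (if Function.Injective (Fin.cons x ι : Fin (m + 1) → α) ∧
          ∀ t, (Fin.cons x ι : Fin (m + 1) → α) t ∉ s
        then ∏ t, p ((Fin.cons x ι : Fin (m + 1) → α) t) else 0) =
      if x ∈ sᶜ then p x * (if Function.Injective ι ∧ ∀ t, ι t ∉ insert x s
        then ∏ t, p (ι t) else 0) else 0 := by
    intro x ι
    simp only [injective_cons_and_notMem_iff, Finset.mem_compl, ite_and, Fin.prod_univ_succ,
      Fin.cons_zero, Fin.cons_succ, mul_ite, mul_zero]
  rw [sumInjectiveAvoiding, ← Fintype.sum_equiv (Fin.consEquiv fun _ => α) _ _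
    (fun q => (hcons q.1 q.2).symm), Fintype.sum_prod_type]
  simp only [Finset.sum_ite_irrel, Finset.sum_const_zero, ← Finset.mul_sum, Finset.sum_ite_mem,
    Finset.univ_inter]
  rfl

theorem sumInjectiveAvoiding_eq (p : α → R) {m : ℕ} {s : Finset α}
    (h : m + s.card = Fintype.card α) :
    sumInjectiveAvoiding p s m = m.factorial * ∏ x ∈ sᶜ, p x := by
  induction m generalizing s with
  | zero =>
    obtain rfl : s = Finset.univ := Finset.eq_univ_of_card s (by omega)
    simp [sumInjectiveAvoiding, Function.injective_of_subsingleton]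
  | succ m ih =>
    have hterm : ∀ x ∈ sᶜ, p x * sumInjectiveAvoiding p (insert x s) m =
        m.factorial * ∏ x ∈ sᶜ, p x := by
      intro x hx
      have hxs : x ∉ s := Finset.mem_compl.mp hx
      rw [ih (by rw [Finset.card_insert_of_notMem hxs]; omega), Finset.compl_insert,
        mul_left_comm, Finset.mul_prod_erase _ _ hx]
    have hcard : sᶜ.card = m + 1 := by rw [Finset.card_compl]; omega
    rw [sumInjectiveAvoiding_succ, Finset.sum_congr rfl hterm, Finset.sum_const, hcard,
      nsmul_eq_mul, Nat.factorial_succ]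
    push_cast
    ring

theorem sum_sum_ite_ne_and_ne (i : α) (c : ℝ) :
    ∑ r, ∑ s, (if i ≠ s ∧ r ≠ i ∧ r ≠ s then c else 0) =
      (Fintype.card α - 1) * (Fintype.card α - 2) * c := by
  have hdelta : ∀ r s : α, (if i ≠ s ∧ r ≠ i ∧ r ≠ s then c else 0) =
      c * (1 - if i = s then 1 else 0) * (1 - if r = i then 1 else 0) *
        (1 - if r = s then 1 else 0) := by
    intro r s
    split_ifs <;> simp_all
  simp only [hdelta]
  simp only [mul_sub, mul_one, mul_ite, mul_zero, Finset.sum_sub_distrib, Finset.sum_const,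
    Finset.card_univ, nsmul_eq_mul, Finset.sum_ite_eq, Finset.mem_univ, ↓reduceIte,
    Finset.sum_ite_irrel, Finset.sum_ite_eq', sub_self, sub_zero, sub_mul, one_mul]
  ring

theorem sum_sum_kronecker_eq_zero (i : α) {x : ℝ} (hx : Fintype.card α * x = 2) :
    ∑ r, ∑ s, (2 - Fintype.card α * (if r = s then 1 else 0)) * (x - if s = i then 1 else 0) *
      (x - (if r = i then 1 else 0) - if r = s then 1 else 0) = 0 := by
  simp only [mul_ite, mul_one, mul_zero, mul_sub, sub_mul, ite_mul, zero_mul,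
    Finset.sum_sub_distrib, Finset.sum_const, Finset.card_univ, nsmul_eq_mul, Finset.sum_ite_eq,
    Finset.mem_univ, ↓reduceIte, Finset.sum_ite_eq', Finset.sum_ite_irrel]
  linear_combination (Fintype.card α * x - 2 + Fintype.card α) * hx

end FiniteSums

section Monomials

variable {ι : Type*} [Fintype ι]

def rpowMonomial (c : ℝ) (e q : ι → ℝ) : ℝ := c * ∏ l, q l ^ e l

theorem rpowMonomial_sub_single [DecidableEq ι] {q : ι → ℝ} (hq : ∀ l, 0 < q l) (c : ℝ)
    (e : ι → ℝ) (k : ι) :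
    rpowMonomial c (e - Pi.single k (1 : ℝ)) q = rpowMonomial c e q / q k := by
  have hsingle : ∏ l, q l ^ (Pi.single k 1 : ι → ℝ) l = q k := by
    rw [Fintype.prod_eq_single k fun l hl => by rw [Pi.single_eq_of_ne hl, Real.rpow_zero],
      Pi.single_eq_same, Real.rpow_one]
  simp only [rpowMonomial, Pi.sub_apply, Real.rpow_sub (hq _), Finset.prod_div_distrib, hsingle,
    mul_div_assoc]

end Monomials

theorem pd_congr_of_pos {n : ℕ} {f g : (Fin n → ℝ) → ℝ} {q : Fin n → ℝ} (hq : ∀ l, 0 < q l)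
    (h : ∀ r, (∀ l, 0 < r l) → f r = g r) (k : Fin n) : pd f k q = pd g k q := by
  refine Filter.EventuallyEq.deriv_eq ?_
  filter_upwards [eventually_gt_nhds (hq k)] with t ht
  refine h _ fun l => ?_
  rcases eq_or_ne l k with rfl | hl
  · simpa using ht
  · simpa [Function.update_of_ne hl] using hq l

theorem pd_rpowMonomial {n : ℕ} {q : Fin n → ℝ} (hq : ∀ l, 0 < q l) (c : ℝ) (e : Fin n → ℝ)
    (k : Fin n) :
    pd (rpowMonomial c e) k q = rpowMonomial (c * e k) (e - Pi.single k (1 : ℝ)) q := by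
  set A := c * ∏ l ∈ ({k} : Finset (Fin n))ᶜ, q l ^ e l
  have hline : (fun t => rpowMonomial c e (Function.update q k t)) = fun t => A * t ^ e k := by
    funext t
    have hrest : ∏ l ∈ ({k} : Finset (Fin n))ᶜ, Function.update q k t l ^ e l =
        ∏ l ∈ ({k} : Finset (Fin n))ᶜ, q l ^ e l :=
      Finset.prod_congr rfl fun l hl => by rw [Function.update_of_ne (by simpa using hl)]
    rw [rpowMonomial, Fintype.prod_eq_mul_prod_compl k, Function.update_self, hrest]
    ring
  have hderiv := (Real.hasDerivAt_rpow_const (p := e k) (Or.inl (hq k).ne')).const_mul A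
  rw [pd, hline, hderiv.deriv, rpowMonomial_sub_single hq, rpowMonomial,
    Fintype.prod_eq_mul_prod_compl k, Real.rpow_sub_one (hq k).ne']
  ring

section BerwaldMoor

variable {N : ℕ}

theorem BMc_mul (ψ : Fin (N + 4) → Fin (N + 4)) (P : ℝ) :
    BMc N ψ * P = ((N + 4).factorial : ℝ)⁻¹ *
      if Function.Injective ψ ∧ ∀ t, ψ t ∉ (∅ : Finset (Fin (N + 4))) then P else 0 := by
  simp only [BMc, Finset.notMem_empty, not_false_eq_true, implies_true, and_true, ite_mul,
    zero_mul, mul_ite, mul_zero]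

theorem Afun_eq (p : Fin (N + 4) → ℝ) : Afun N p = ∏ i, p i := by
  have h := sumInjectiveAvoiding_eq p (m := N + 4) (s := ∅) (by simp)
  simp only [Afun, BMc_mul, ← sumInjectiveAvoiding.eq_1, ← Finset.mul_sum, h,
    Finset.compl_empty, ← mul_assoc]
  rw [inv_mul_cancel₀ (by positivity), one_mul]

variable {p : Fin (N + 4) → ℝ}

theorem Kfun_pos (hp : ∀ i, 0 < p i) : 0 < Kfun N p := by
  rw [Kfun, Afun_eq]
  exact Real.rpow_pos_of_pos (Finset.prod_pos fun i _ => hp i) _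

theorem Kfun_pow (hp : ∀ i, 0 < p i) : Kfun N p ^ (N + 4) = ∏ i, p i := by
  rw [Kfun, Afun_eq, ← Real.rpow_natCast,
    ← Real.rpow_mul (Finset.prod_nonneg fun i _ => (hp i).le), one_div, Nat.cast_add,
    Nat.cast_ofNat, inv_mul_cancel₀ (by positivity), Real.rpow_one]

theorem aU1_eq (hp : ∀ i, 0 < p i) (i : Fin (N + 4)) :
    aU1 N i p = Kfun N p / ((N + 4) * p i) := by
  have h := sumInjectiveAvoiding_eq p (m := N + 3) (s := {i}) (by simp)
  have hprod : (∏ x ∈ {i}ᶜ, p x) * p i = Kfun N p ^ (N + 4) := by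
    rw [Kfun_pow hp, ← Finset.prod_compl_mul_prod {i}, Finset.prod_singleton]
  have hfac : ((N + 4).factorial : ℝ) = (N + 4) * (N + 3).factorial := by
    push_cast [Nat.factorial_succ]; ring
  have hK := (Kfun_pos hp).ne'
  have hpi := (hp i).ne'
  simp only [aU1, BMc_mul, injective_cons_and_notMem_iff]
  simp only [Finset.notMem_empty, not_false_eq_true, true_and, Finset.insert_empty,
    ← sumInjectiveAvoiding.eq_1, ← Finset.mul_sum, h, hfac]
  field_simp
  linear_combination hprod

theorem aU3_eq (hp : ∀ i, 0 < p i) (i j k : Fin (N + 4)) :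
    aU3 N i j k p = if j ≠ i ∧ k ≠ j ∧ k ≠ i then
      Kfun N p ^ 3 / ((N + 4) * (N + 3) * (N + 2) * (p i * p j * p k)) else 0 := by
  have hnum : (∑ ι : Fin (N + 1) → Fin (N + 4),
      BMc N (Fin.cons i (Fin.cons j (Fin.cons k ι))) * ∏ t, p (ι t)) =
      ((N + 4).factorial : ℝ)⁻¹ * if j ≠ i ∧ k ≠ j ∧ k ≠ i then
        sumInjectiveAvoiding p {k, j, i} (N + 1) else 0 := by
    simp only [BMc_mul, injective_cons_and_notMem_iff]
    simp only [sum_ite_and_left, ← sumInjectiveAvoiding.eq_1, ← Finset.mul_sum]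
    simp only [Finset.notMem_empty, not_false_eq_true, if_true, Finset.insert_empty,
      Finset.mem_singleton, Finset.mem_insert, not_or, ne_eq, ite_and]
  rw [aU3, hnum]
  split_ifs with hd
  · obtain ⟨hji, hkj, hki⟩ := hd
    have hcard : N + 1 + ({k, j, i} : Finset (Fin (N + 4))).card = Fintype.card (Fin (N + 4)) := by
      rw [Finset.card_insert_of_notMem (by simp [hkj, hki]),
        Finset.card_insert_of_notMem (by simp [hji]), Finset.card_singleton, Fintype.card_fin]
    have hprod : (∏ x ∈ {k, j, i}ᶜ, p x) * (p i * p j * p k) = Kfun N p ^ (N + 4) := by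
      rw [Kfun_pow hp, ← Finset.prod_compl_mul_prod {k, j, i},
        Finset.prod_insert (by simp [hkj, hki]), Finset.prod_insert (by simp [hji]),
        Finset.prod_singleton]
      ring
    have hfac : ((N + 4).factorial : ℝ) = (N + 4) * (N + 3) * (N + 2) * (N + 1).factorial := by
      push_cast [Nat.factorial_succ]; ring
    have hK := (Kfun_pos hp).ne'
    have hpi := (hp i).ne'
    have hpj := (hp j).ne'
    have hpk := (hp k).ne'
    rw [sumInjectiveAvoiding_eq p hcard, hfac]
    field_simp
    linear_combination hprod
  · simp

theorem sum_aLowBM_mul_aU3 (hp : ∀ i, 0 < p i) (i : Fin (N + 4)) :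
    ∑ r, ∑ s, aLowBM N p r s * aU3 N s i r p = (N + 4) * aU1 N i p := by
  have hK := (Kfun_pos hp).ne'
  have hterm : ∀ r s, aLowBM N p r s * aU3 N s i r p =
      if i ≠ s ∧ r ≠ i ∧ r ≠ s then Kfun N p / ((N + 3) * (N + 2) * p i) else 0 := by
    intro r s
    rw [aU3_eq hp]
    split_ifs with hd
    · have hps := (hp s).ne'
      have hpi := (hp i).ne'
      have hpr := (hp r).ne'
      rw [aLowBM, if_neg hd.2.2]
      field_simp
    · simp
  have hcount := sum_sum_ite_ne_and_ne i (Kfun N p / ((N + 3) * (N + 2) * p i))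
  simp only [Fintype.card_fin, Nat.cast_add, Nat.cast_ofNat] at hcount
  have hpi := (hp i).ne'
  rw [Finset.sum_congr rfl fun r _ => Finset.sum_congr rfl fun s _ => hterm r s, hcount,
    aU1_eq hp]
  field_simp
  ring

def bmExponent (N : ℕ) : Fin (N + 4) → ℝ := fun _ => 2 / (N + 4)

theorem Kfun_sq_eq (hp : ∀ i, 0 < p i) : Kfun N p ^ 2 = rpowMonomial 1 (bmExponent N) p := by
  rw [Kfun, Afun_eq, ← Real.rpow_natCast,
    ← Real.rpow_mul (Finset.prod_nonneg fun i _ => (hp i).le), rpowMonomial, one_mul]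
  simp only [bmExponent]
  rw [Real.finsetProd_rpow _ _ fun i _ => (hp i).le]
  congr 1
  push_cast
  ring

theorem gU_eq (hp : ∀ i, 0 < p i) (i j : Fin (N + 4)) :
    gU N i j p = rpowMonomial (2 / (N + 4) * (2 / (N + 4) - if i = j then 1 else 0) / 2)
      (bmExponent N - Pi.single j (1 : ℝ) - Pi.single i (1 : ℝ)) p := by
  have hfirst : ∀ q : Fin (N + 4) → ℝ, (∀ l, 0 < q l) →
      pd (fun r => Kfun N r ^ 2) j q =
        rpowMonomial (1 * bmExponent N j) (bmExponent N - Pi.single j (1 : ℝ)) q :=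
    fun q hq => by rw [pd_congr_of_pos hq (fun r hr => Kfun_sq_eq hr), pd_rpowMonomial hq]
  rw [gU, pd_congr_of_pos hp hfirst, pd_rpowMonomial hp, rpowMonomial, rpowMonomial]
  simp only [bmExponent, Pi.sub_apply, Pi.single_apply]
  ring

theorem CU_eq (hp : ∀ i, 0 < p i) (i j k : Fin (N + 4)) :
    CU N i j k p = rpowMonomial
      (-(2 / (N + 4) * (2 / (N + 4) - if i = j then 1 else 0) / 2 *
        (2 / (N + 4) - (if k = j then 1 else 0) - if k = i then 1 else 0)) / 2)
      (bmExponent N - Pi.single j (1 : ℝ) - Pi.single i (1 : ℝ) - Pi.single k (1 : ℝ)) p := by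
  rw [CU, pd_congr_of_pos hp (fun r hr => gU_eq hr i j), pd_rpowMonomial hp, rpowMonomial,
    rpowMonomial]
  simp only [bmExponent, Pi.sub_apply, Pi.single_apply]
  ring

theorem gLowBM_eq (r s : Fin (N + 4)) :
    gLowBM N p r s =
      (2 - (N + 4) * if r = s then 1 else 0) * (p r / Kfun N p) * (p s / Kfun N p) := by
  rw [gLowBM, aLowBM]
  split_ifs with h
  · subst h
    field_simp
    ring
  · field_simp
    ring

theorem sum_CL_eq_zero (hp : ∀ i, 0 < p i) (i : Fin (N + 4)) : ∑ r, CL N p r i r = 0 := by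
  have hK := (Kfun_pos hp).ne'
  have hpi := (hp i).ne'
  have hK2 : ∏ l, p l ^ bmExponent N l = Kfun N p ^ 2 := by
    rw [Kfun_sq_eq hp, rpowMonomial, one_mul]
  have hterm : ∀ r s, gLowBM N p r s * CU N s i r p =
      -(1 / (2 * (N + 4) * p i)) * ((2 - (N + 4) * if r = s then 1 else 0) *
        (2 / (N + 4) - if s = i then 1 else 0) *
        (2 / (N + 4) - (if r = i then 1 else 0) - if r = s then 1 else 0)) := by
    intro r s
    have hps := (hp s).ne'
    have hpr := (hp r).ne'
    rw [gLowBM_eq, CU_eq hp, rpowMonomial_sub_single hp, rpowMonomial_sub_single hp,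
      rpowMonomial_sub_single hp, rpowMonomial, hK2]
    field_simp
  have hkron := sum_sum_kronecker_eq_zero i (x := 2 / (N + 4))
    (by simp only [Fintype.card_fin, Nat.cast_add, Nat.cast_ofNat]; field_simp)
  simp only [Fintype.card_fin, Nat.cast_add, Nat.cast_ofNat] at hkron
  simp only [CL, hterm, ← Finset.mul_sum, hkron, mul_zero]

end BerwaldMoor

/-- for the Berwald–Moór metric of momenta (`n = N + 4`),
`∑_r a_r^{ir} = n a^i`, and hence the torsion covector `C^i = ∑_r C_r^{ir}` vanishes. -/
theorem stmt_17 (N : ℕ) (p : Fin (N + 4) → ℝ) (hp : ∀ i, 0 < p i) :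
    (∀ i, ∑ r, (∑ s, aLowBM N p r s * aU3 N s i r p) = (N + 4 : ℝ) * aU1 N i p) ∧
    (∀ i, ∑ r, CL N p r i r = 0) :=
  ⟨sum_aLowBM_mul_aU3 hp, sum_CL_eq_zero hp⟩
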